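/- The map M : SL₂(ℤ) × 𝔥 → GL₂(ℂ) defined by M_γ(τ) = [[(cτ+d)^{-1}, 0], [2πi c, cτ+d]] for γ = (a b; c d) is a factor of automorphy: M_{γ₁γ₂}(τ) = M_{γ₁}(γ₂τ) M_{γ₂}(τ) for all γ₁, γ₂ ∈ SL₂(ℤ) and τ ∈ 𝔥. -/

import Mathlib

/-!
With `j(γ, τ) = cτ + d`, `M_γ(τ)` is lower triangular with diagonal `(j⁻¹, j)`. On the diagonal
the claim is the cocycle relation `j(γ₁γ₂, τ) = j(γ₁, γ₂τ) j(γ₂, τ)`; in the lower-left corner it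
becomes `c(γ₁γ₂) = c₁ j(γ₂, τ)⁻¹ + j(γ₁, γ₂τ) c₂`, which is the polynomial identity
`c(gh) j(h, z) = c(g) det h + c(h) j(gh, z)` combined with the cocycle relation and `det γ₂ = 1`.
-/

open UpperHalfPlane

noncomputable section

namespace Stmt8

/-- `M_γ(τ) = [[(cτ+d)⁻¹, 0], [2πi c, cτ+d]]` for `γ = (a b; c d) ∈ SL₂(ℤ)`, `τ ∈ 𝔥`. -/
def M (γ : Matrix.SpecialLinearGroup (Fin 2) ℤ) (τ : UpperHalfPlane) :
    Matrix (Fin 2) (Fin 2) ℂ :=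
  !![(((γ : Matrix (Fin 2) (Fin 2) ℤ) 1 0 : ℂ) * (τ : ℂ) +
        ((γ : Matrix (Fin 2) (Fin 2) ℤ) 1 1 : ℂ))⁻¹, 0;
     2 * (Real.pi : ℂ) * Complex.I * ((γ : Matrix (Fin 2) (Fin 2) ℤ) 1 0 : ℂ),
     ((γ : Matrix (Fin 2) (Fin 2) ℤ) 1 0 : ℂ) * (τ : ℂ) +
       ((γ : Matrix (Fin 2) (Fin 2) ℤ) 1 1 : ℂ)]

open scoped MatrixGroups

lemma inv_diag_lowerTriangular_mul {K : Type*} [Field K] (a b x y : K) :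
    !![a⁻¹, 0; x, a] * !![b⁻¹, 0; y, b] = !![(a * b)⁻¹, 0; x * b⁻¹ + a * y, a * b] := by
  simp [mul_comm]

lemma denom_mul_of_det_pos (g h : GL (Fin 2) ℝ) (hh : 0 < h.det.val) (z : ℍ) :
    denom (g * h) z = denom g ↑(h • z) * denom h z := by
  rw [Matrix.GeneralLinearGroup.val_det_apply] at hh
  simp [denom_cocycle_σ, σ, hh]

lemma mul_apply_one_zero_mul_denom (g h : GL (Fin 2) ℝ) (z : ℂ) :
    ((g * h) 1 0 : ℂ) * denom h z = g 1 0 * h.det.val + h 1 0 * denom (g * h) z := by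
  simp only [denom, Units.val_mul, Matrix.mul_apply, Fin.sum_univ_two,
    Matrix.GeneralLinearGroup.val_det_apply, Matrix.det_fin_two, Complex.ofReal_add,
    Complex.ofReal_mul, Complex.ofReal_sub]
  ring

lemma SL_denom_mul (γ₁ γ₂ : SL(2, ℤ)) (τ : ℍ) :
    denom ((γ₁ * γ₂ : SL(2, ℤ)) : GL (Fin 2) ℝ) τ = denom γ₁ ↑(γ₂ • τ) * denom γ₂ τ := by
  simpa using denom_mul_of_det_pos γ₁ γ₂ (by simp) τ

lemma SL_mul_apply_one_zero (γ₁ γ₂ : SL(2, ℤ)) (τ : ℍ) :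
    ((γ₁ * γ₂) 1 0 : ℂ) = γ₁ 1 0 * (denom γ₂ τ)⁻¹ + denom γ₁ ↑(γ₂ • τ) * γ₂ 1 0 := by
  have h : ((γ₁ * γ₂) 1 0 : ℂ) * denom γ₂ τ =
      γ₁ 1 0 + γ₂ 1 0 * denom ((γ₁ * γ₂ : SL(2, ℤ)) : GL (Fin 2) ℝ) τ := by
    simpa [Matrix.mul_apply, Fin.sum_univ_two] using mul_apply_one_zero_mul_denom γ₁ γ₂ τ
  rw [SL_denom_mul] at h
  field_simp
  linear_combination h

lemma M_eq_denom (γ : SL(2, ℤ)) (τ : ℍ) :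
    M γ τ = !![(denom γ τ)⁻¹, 0; 2 * (Real.pi : ℂ) * Complex.I * (γ 1 0 : ℂ), denom γ τ] :=
  rfl

/-- `M` is a factor of automorphy: `M_{γ₁γ₂}(τ) = M_{γ₁}(γ₂τ) M_{γ₂}(τ)`. -/
theorem factor_of_automorphy (γ₁ γ₂ : Matrix.SpecialLinearGroup (Fin 2) ℤ)
    (τ : UpperHalfPlane) :
    M (γ₁ * γ₂) τ = M γ₁ (γ₂ • τ) * M γ₂ τ := by
  rw [M_eq_denom, M_eq_denom, M_eq_denom, inv_diag_lowerTriangular_mul, SL_denom_mul,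
    SL_mul_apply_one_zero γ₁ γ₂ τ]
  ring_nf

end Stmt8
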